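/- Let L : H → G be bounded linear, bounded below, with ‖L‖ ≤ 1, let B be strictly positive on G, let γ > 0, and set ω = 1 + ‖B⁻¹‖/γ. Define the resolvent composition L ⊙_γ B = (L ⊡_{1/γ} B⁻¹)⁻¹, where L ⊡_μ C = L* ∘ (C⁻¹ + μ(Id_G − L L*))⁻¹ ∘ L, and the parallel composition L* ▸ B = (L* ∘ B⁻¹ ∘ L)⁻¹. Then L* ▸ B ≼ L ⊙_γ B ≼ ω (L* ▸ B). -/

import Mathlib

open ContinuousLinearMap MeasureTheory

noncomputable section

variable {E : Type*} [NormedAddCommGroup E] [InnerProductSpace ℝ E] [CompleteSpace E]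
variable {H G : Type*} [NormedAddCommGroup H] [InnerProductSpace ℝ H] [CompleteSpace H]
  [NormedAddCommGroup G] [InnerProductSpace ℝ G] [CompleteSpace G]

/-- Löwner partial order: `A ≼ B` iff `B - A` is a positive operator. -/
def Loewner (A B : E →L[ℝ] E) : Prop := (B - A).IsPositive

/-- Strictly positive operators: `α • Id ≼ A` for some `α > 0`. -/
def StrictlyPos (A : E →L[ℝ] E) : Prop :=
  IsSelfAdjoint A ∧ ∃ α : ℝ, 0 < α ∧ Loewner (α • (1 : E →L[ℝ] E)) A

/-- Bounded below linear operator. -/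
def BoundedBelow (L : H →L[ℝ] G) : Prop := ∃ β : ℝ, 0 < β ∧ ∀ x : H, β * ‖x‖ ≤ ‖L x‖

/-- Resolvent cocomposition `L ⊡_γ B = L* ∘ (B⁻¹ + γ(Id − L L*))⁻¹ ∘ L`. -/
def rcc (L : H →L[ℝ] G) (γ : ℝ) (B : G →L[ℝ] G) : H →L[ℝ] H :=
  (adjoint L) ∘L (Ring.inverse (Ring.inverse B + γ • ((1 : G →L[ℝ] G) - L ∘L adjoint L))) ∘L L

/-- Resolvent composition `L ⊙_γ B = (L ⊡_{1/γ} B⁻¹)⁻¹`. -/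
def rc (L : H →L[ℝ] G) (γ : ℝ) (B : G →L[ℝ] G) : H →L[ℝ] H :=
  Ring.inverse (rcc L (1/γ) (Ring.inverse B))

/-- Parallel composition `L* ▸ B = (L* ∘ B⁻¹ ∘ L)⁻¹`. -/
def parallelComp (L : H →L[ℝ] G) (B : G →L[ℝ] G) : H →L[ℝ] H :=
  Ring.inverse ((adjoint L) ∘L (Ring.inverse B) ∘L L)

/-- `g(A,B) = inf {λ > 0 : A ≼ λ B}`. -/
def gThomp (A B : E →L[ℝ] E) : ℝ := sInf {l : ℝ | 0 < l ∧ Loewner A (l • B)}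

/-- Thompson metric. -/
def dThomp (A B : E →L[ℝ] E) : ℝ := Real.log (max (gThomp A B) (gThomp B A))

/-- The (unique) positive square root of a positive operator. -/
def opSqrt (A : E →L[ℝ] E) : E →L[ℝ] E :=
  letI := Classical.propDecidable
  if h : ∃ S : E →L[ℝ] E, S.IsPositive ∧ S * S = A then h.choose else 0

/-- Real power `A^t` of a strictly positive operator, `t ∈ (0,1)`, via the
Balakrishnan integral formula `A^t = (sin (π t)/π) ∫₀^∞ s^{t-1} A (A + s)⁻¹ ds`. -/
def opRpow (A : E →L[ℝ] E) (t : ℝ) : E →L[ℝ] E :=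
  (Real.sin (Real.pi * t) / Real.pi) •
    ∫ s in Set.Ioi (0 : ℝ), s ^ (t - 1) • (A * Ring.inverse (A + s • (1 : E →L[ℝ] E)))

/-- Geometric mean `A # B = A^{1/2} (A^{-1/2} B A^{-1/2})^{1/2} A^{1/2}`. -/
def geomMean (A B : E →L[ℝ] E) : E →L[ℝ] E :=
  opSqrt A * opSqrt (Ring.inverse (opSqrt A) * B * Ring.inverse (opSqrt A)) * opSqrt A

/-- `t`-weighted geometric mean `A #_t B = A^{1/2} (A^{-1/2} B A^{-1/2})^t A^{1/2}`. -/
def wGeomMean (t : ℝ) (A B : E →L[ℝ] E) : E →L[ℝ] E :=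
  opSqrt A * opRpow (Ring.inverse (opSqrt A) * B * Ring.inverse (opSqrt A)) t * opSqrt A

/-!
Write `P = 1 - L L*`, so that `L ⊙_γ B = (L* M⁻¹ L)⁻¹` with `M = B + P / γ`. Since `‖L‖ ≤ 1`
we have `0 ≤ P ≤ 1`, and `1 ≤ ‖B⁻¹‖ B`, hence `B ≤ M ≤ ω B`. Inversion of strictly positive
operators is antitone and conjugation `X ↦ L* X L` is monotone for the Löwner order, so
`ω⁻¹ L* B⁻¹ L ≤ L* M⁻¹ L ≤ L* B⁻¹ L`; one more inversion gives the sandwich.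
-/

open scoped RealInnerProductSpace

theorem Ring.inverse_smul {𝕜 R : Type*} [Field 𝕜] [Ring R] [Algebra 𝕜 R] {c : 𝕜} (hc : c ≠ 0)
    (a : R) : Ring.inverse (c • a) = c⁻¹ • Ring.inverse a := by
  have hc' : Ring.inverse (algebraMap 𝕜 R c) = algebraMap 𝕜 R c⁻¹ := by
    simpa using Ring.inverse_unit ((Units.mk0 c hc).map (algebraMap 𝕜 R).toMonoidHom)
  rw [Algebra.smul_def, Ring.inverse_mul (.inl ((IsUnit.mk0 c hc).map _)), hc',
    ← Algebra.commutes, ← Algebra.smul_def]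

namespace ContinuousLinearMap

section Loewner

variable {V : Type*} [NormedAddCommGroup V] [InnerProductSpace ℝ V]

instance : IsOrderedAddMonoid (V →L[ℝ] V) where
  add_le_add_left _ _ h _ := by simpa [le_def] using h

instance : ZeroLEOneClass (V →L[ℝ] V) where
  zero_le_one := (nonneg_iff_isPositive 1).2 isPositive_one

instance : PosSMulMono ℝ (V →L[ℝ] V) where
  smul_le_smul_of_nonneg_left _ ha _ _ h := by
    simpa [le_def, smul_sub] using ((le_def _ _).1 h).smul_of_nonneg ha

instance : SMulPosMono ℝ (V →L[ℝ] V) where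
  smul_le_smul_of_nonneg_right _ hb _ _ h := by
    simpa [le_def, sub_smul] using ((nonneg_iff_isPositive _).1 hb).smul_of_nonneg (sub_nonneg.2 h)

theorem inner_apply_self_le_of_le {A B : V →L[ℝ] V} (h : A ≤ B) (x : V) :
    ⟪A x, x⟫ ≤ ⟪B x, x⟫ := by
  simpa [inner_sub_left] using ((le_def A B).1 h).inner_nonneg_left x

theorem IsPositive.inner_apply_sq_le {A : V →L[ℝ] V} (hA : A.IsPositive) (x y : V) :
    ⟪A x, y⟫ ^ 2 ≤ ⟪A x, x⟫ * ⟪A y, y⟫ := by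
  have hsymm : ⟪A y, x⟫ = ⟪A x, y⟫ := by rw [hA.inner_left_eq_inner_right, real_inner_comm]
  have hquad : ∀ t : ℝ, 0 ≤ ⟪A y, y⟫ * (t * t) + 2 * ⟪A x, y⟫ * t + ⟪A x, x⟫ := fun t => by
    have := hA.inner_nonneg_left (x + t • y)
    simp only [map_add, map_smul, inner_add_left, inner_add_right, real_inner_smul_left,
      real_inner_smul_right, hsymm] at this
    linarith
  have := discrim_le_zero hquad
  rw [discrim] at this
  linarith

theorem apply_ringInverse_apply {A : V →L[ℝ] V} (hA : IsUnit A) (x : V) :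
    A (Ring.inverse A x) = x := by
  simpa using congr($(Ring.mul_inverse_cancel A hA) x)

end Loewner

theorem le_of_inner_apply_self_le {A B : E →L[ℝ] E} (hA : IsSelfAdjoint A) (hB : IsSelfAdjoint B)
    (h : ∀ x, ⟪A x, x⟫ ≤ ⟪B x, x⟫) : A ≤ B :=
  (le_def A B).2 <| (isPositive_iff' _).2 ⟨hB.sub hA, fun x => by simpa [inner_sub_left] using h x⟩

theorem isSelfAdjoint_smul_one (c : ℝ) : IsSelfAdjoint (c • (1 : E →L[ℝ] E)) :=
  (IsSelfAdjoint.all c).smul (.one _)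

theorem _root_.IsSelfAdjoint.le_norm_smul_one {A : E →L[ℝ] E} (hA : IsSelfAdjoint A) :
    A ≤ ‖A‖ • 1 := by
  refine le_of_inner_apply_self_le hA (isSelfAdjoint_smul_one _) fun x => ?_
  simp only [smul_apply, one_apply_eq_self, real_inner_smul_left, real_inner_self_eq_norm_sq]
  nlinarith [real_inner_le_norm (A x) x, le_opNorm A x, norm_nonneg x]

theorem adjoint_conj_le_adjoint_conj {A B : G →L[ℝ] G} (h : A ≤ B) (L : H →L[ℝ] G) :
    adjoint L ∘L A ∘L L ≤ adjoint L ∘L B ∘L L := by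
  rw [le_def, ← comp_sub, ← sub_comp]
  exact ((le_def A B).1 h).adjoint_conj L

theorem comp_adjoint_le_one {L : H →L[ℝ] G} (hL : ‖L‖ ≤ 1) : L ∘L adjoint L ≤ 1 := by
  have hnorm : ‖L ∘L adjoint L‖ ≤ 1 :=
    calc ‖L ∘L adjoint L‖ ≤ ‖L‖ * ‖adjoint L‖ := opNorm_comp_le _ _
      _ = ‖L‖ * ‖L‖ := by rw [adjoint.norm_map]
      _ ≤ 1 := mul_le_one₀ hL (norm_nonneg _) hL
  calc L ∘L adjoint L ≤ ‖L ∘L adjoint L‖ • 1 :=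
        (isPositive_self_comp_adjoint L).isSelfAdjoint.le_norm_smul_one
    _ ≤ 1 := smul_le_of_le_one_left zero_le_one hnorm

end ContinuousLinearMap

theorem BoundedBelow.strictlyPos_adjoint_comp_self {L : H →L[ℝ] G} (hL : BoundedBelow L) :
    StrictlyPos (adjoint L ∘L L) := by
  obtain ⟨β, hβ, hLβ⟩ := hL
  have hL_sa := (isPositive_adjoint_comp_self L).isSelfAdjoint
  refine ⟨hL_sa, β ^ 2, by positivity, le_of_inner_apply_self_le (isSelfAdjoint_smul_one _) hL_sa
    fun x => ?_⟩
  rw [comp_apply, adjoint_inner_left, real_inner_self_eq_norm_sq]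
  simp only [smul_apply, one_apply_eq_self, real_inner_smul_left, real_inner_self_eq_norm_sq]
  nlinarith [hLβ x, mul_nonneg hβ.le (norm_nonneg x)]

namespace StrictlyPos

variable {A B : E →L[ℝ] E}

theorem isPositive (hA : StrictlyPos A) : A.IsPositive := by
  obtain ⟨-, α, hα, hαA : α • 1 ≤ A⟩ := hA
  exact (nonneg_iff_isPositive A).1 ((smul_nonneg hα.le zero_le_one).trans hαA)

theorem isUnit (hA : StrictlyPos A) : IsUnit A := by
  obtain ⟨-, α, hα, hαA : α • 1 ≤ A⟩ := hA
  refine isUnit_of_forall_le_norm_inner_map A (c := ⟨α, hα.le⟩) hα fun x => ?_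
  have := inner_apply_self_le_of_le hαA x
  simp only [smul_apply, one_apply_eq_self, real_inner_smul_left, real_inner_self_eq_norm_sq]
    at this
  show ‖x‖ ^ 2 * α ≤ |⟪A x, x⟫|
  linarith [le_abs_self ⟪A x, x⟫]

theorem of_le (hA : StrictlyPos A) (h : A ≤ B) : StrictlyPos B := by
  obtain ⟨hA_sa, α, hα, hαA : α • 1 ≤ A⟩ := hA
  refine ⟨?_, α, hα, hαA.trans h⟩
  simpa using hA_sa.add ((le_def A B).1 h).isSelfAdjoint

theorem smul (hA : StrictlyPos A) {c : ℝ} (hc : 0 < c) : StrictlyPos (c • A) := by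
  obtain ⟨hA_sa, α, hα, hαA : α • 1 ≤ A⟩ := hA
  refine ⟨(IsSelfAdjoint.all c).smul hA_sa, c * α, mul_pos hc hα, ?_⟩
  rw [mul_smul]
  exact smul_le_smul_of_nonneg_left hαA hc.le

theorem ringInverse_le_ringInverse (hA : StrictlyPos A) (h : A ≤ B) :
    Ring.inverse B ≤ Ring.inverse A := by
  have hB := hA.of_le h
  have hA_pos := hA.isPositive
  refine le_of_inner_apply_self_le hB.1.ringInverse hA.1.ringInverse fun x => ?_
  set u := Ring.inverse B x
  set v := Ring.inverse A x
  have hBu : B u = x := apply_ringInverse_apply hB.isUnit x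
  have hAv : A v = x := apply_ringInverse_apply hA.isUnit x
  -- Cauchy–Schwarz for `⟪A ·, ·⟫` at `u, v` reads `⟪u, x⟫² ≤ ⟪A u, u⟫ ⟪v, x⟫ ≤ ⟪u, x⟫ ⟪v, x⟫`.
  have hcs := hA_pos.inner_apply_sq_le u v
  rw [hA_pos.inner_left_eq_inner_right u v, hAv, real_inner_comm v x] at hcs
  have huu : ⟪A u, u⟫ ≤ ⟪u, x⟫ := by
    simpa [hBu, real_inner_comm] using inner_apply_self_le_of_le h u
  have hv : 0 ≤ ⟪v, x⟫ := by simpa [hAv, real_inner_comm] using hA_pos.inner_nonneg_left v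
  nlinarith [hA_pos.inner_nonneg_left u]

theorem ringInverse (hA : StrictlyPos A) : StrictlyPos (Ring.inverse A) := by
  have hc : 0 < ‖A‖ + 1 := by positivity
  have hle : A ≤ (‖A‖ + 1) • 1 :=
    calc A ≤ ‖A‖ • 1 := hA.1.le_norm_smul_one
      _ ≤ ‖A‖ • 1 + 1 := le_add_of_nonneg_right zero_le_one
      _ = (‖A‖ + 1) • 1 := by rw [add_smul, one_smul]
  have := hA.ringInverse_le_ringInverse hle
  rw [Ring.inverse_smul hc.ne', Ring.inverse_one] at this
  exact ⟨hA.1.ringInverse, (‖A‖ + 1)⁻¹, inv_pos.2 hc, this⟩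

theorem one_le_norm_ringInverse_smul (hA : StrictlyPos A) : 1 ≤ ‖Ring.inverse A‖ • A := by
  rcases subsingleton_or_nontrivial E with hE | hE
  · exact (Subsingleton.elim _ _).le
  have hc : 0 < ‖Ring.inverse A‖ := norm_pos_iff.2 hA.isUnit.ringInverse.ne_zero
  have := hA.ringInverse.ringInverse_le_ringInverse hA.ringInverse.1.le_norm_smul_one
  rw [Ring.inverse_smul hc.ne', Ring.inverse_one, Ring.inverse_inverse hA.isUnit] at this
  calc 1 = ‖Ring.inverse A‖ • ‖Ring.inverse A‖⁻¹ • (1 : E →L[ℝ] E) := by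
        rw [smul_smul, mul_inv_cancel₀ hc.ne', one_smul]
    _ ≤ ‖Ring.inverse A‖ • A := smul_le_smul_of_nonneg_left this hc.le

theorem adjoint_conj {A : G →L[ℝ] G} (hA : StrictlyPos A) {L : H →L[ℝ] G} (hL : BoundedBelow L) :
    StrictlyPos (adjoint L ∘L A ∘L L) := by
  obtain ⟨-, α, hα, hαA : α • 1 ≤ A⟩ := hA
  refine (hL.strictlyPos_adjoint_comp_self.smul hα).of_le ?_
  simpa [one_def] using adjoint_conj_le_adjoint_conj hαA L

end StrictlyPos

theorem rc_sandwich (L : H →L[ℝ] G) (hL : BoundedBelow L) (hL1 : ‖L‖ ≤ 1)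
    (B : G →L[ℝ] G) (hB : StrictlyPos B) (γ : ℝ) (hγ : 0 < γ) :
    Loewner (parallelComp L B) (rc L γ B) ∧
      Loewner (rc L γ B) ((1 + ‖Ring.inverse B‖ / γ) • parallelComp L B) := by
  set ω := 1 + ‖Ring.inverse B‖ / γ
  have hω : 0 < ω := by positivity
  set P := 1 - L ∘L adjoint L
  have hP₀ : 0 ≤ P := sub_nonneg.2 (comp_adjoint_le_one hL1)
  have hP₁ : P ≤ 1 := sub_le_self _ ((nonneg_iff_isPositive _).2 (isPositive_self_comp_adjoint L))
  set M := B + (1 / γ) • P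
  have hBM : B ≤ M := le_add_of_nonneg_right (smul_nonneg (by positivity) hP₀)
  have hMω : M ≤ ω • B :=
    calc M ≤ B + (1 / γ) • (‖Ring.inverse B‖ • B) := add_le_add le_rfl <|
          smul_le_smul_of_nonneg_left (hP₁.trans hB.one_le_norm_ringInverse_smul) (by positivity)
      _ = ω • B := by module
  set T := adjoint L ∘L Ring.inverse B ∘L L
  set S := adjoint L ∘L Ring.inverse M ∘L L
  have hT : StrictlyPos T := hB.ringInverse.adjoint_conj hL
  have hS : StrictlyPos S := (hB.of_le hBM).ringInverse.adjoint_conj hL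
  have hST : S ≤ T := adjoint_conj_le_adjoint_conj (hB.ringInverse_le_ringInverse hBM) L
  have hTS : ω⁻¹ • T ≤ S := by
    have := (hB.of_le hBM).ringInverse_le_ringInverse hMω
    rw [Ring.inverse_smul hω.ne'] at this
    simpa using adjoint_conj_le_adjoint_conj this L
  have hrc : rc L γ B = Ring.inverse S := by rw [rc, rcc, Ring.inverse_inverse hB.isUnit]
  have hpc : parallelComp L B = Ring.inverse T := rfl
  have hωT := (hT.smul (inv_pos.2 hω)).ringInverse_le_ringInverse hTS
  rw [Ring.inverse_smul (inv_ne_zero hω.ne'), inv_inv] at hωT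
  rw [hrc, hpc]
  exact ⟨hS.ringInverse_le_ringInverse hST, hωT⟩

end
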